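/- With H_1 = span{e_1, …, e_k}, H_2 = span{cos α_j e_j + sin α_j e_{i+k+1−j} : j = 1, …, i}, and x = Σ_{j=1}^i ρ_j (cos θ_j e_j + sin θ_j e_{i+k+1−j}) + y_1 + y_2 with y_1 ∈ span{e_{i+1},…,e_k} and y_2 ∈ (H_1+H_2)^⊥, for every natural number m one has (R_{H_2} R_{H_1})^m x = Σ_{j=1}^i ρ_j (cos(2mα_j + θ_j) e_j + sin(2mα_j + θ_j) e_{i+k+1−j}) + (−1)^m y_1 + y_2. -/

import Mathlib

/-!
On the plane spanned by `u = e_j ∈ H₁` and `v = e_{i+k+1−j} ∈ H₁ᗮ`, `R_{H₁}` is the reflection in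
the line of angle `0` and, since `cos α • u + sin α • v ∈ H₂` and `-sin α • u + cos α • v ∈ H₂ᗮ`,
`R_{H₂}` is the reflection in the line of angle `α = α_j`. Reflection in the line of angle `α`
sends the angle `ψ` to `2α - ψ`, so `R_{H₂} R_{H₁}` rotates that plane by `2α`. It acts as `-1` on
`y₁ ∈ H₁ ∩ H₂ᗮ` and as the identity on `y₂ ∈ (H₁ + H₂)ᗮ`.
-/

open Real Submodule
open scoped RealInnerProductSpace

theorem cos_smul_add_sin_smul_rotate {M : Type*} [AddCommGroup M] [Module ℝ M]
    (α β : ℝ) (u v : M) :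
    cos β • (cos α • u + sin α • v) + sin β • (-sin α • u + cos α • v) =
      cos (α + β) • u + sin (α + β) • v := by
  rw [cos_add, sin_add]
  match_scalars <;> ring

section Reflection

variable {E : Type*} [NormedAddCommGroup E] [InnerProductSpace ℝ E]

theorem mem_orthogonal_span_of_forall_inner {s : Set E} {x : E}
    (h : ∀ u ∈ s, ⟪x, u⟫ = 0) : x ∈ (span ℝ s)ᗮ :=
  (isOrtho_span.2 (by rintro _ rfl; exact h)).le (mem_span_singleton_self x)

theorem neg_sin_smul_add_cos_smul_mem_orthogonal_span {κ : Type*} {u v : κ → E}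
    (hu : Orthonormal ℝ u) (hv : Orthonormal ℝ v) (huv : ∀ j j', ⟪u j, v j'⟫ = 0)
    (α : κ → ℝ) (j : κ) :
    -sin (α j) • u j + cos (α j) • v j ∈
      (span ℝ (Set.range fun j' => cos (α j') • u j' + sin (α j') • v j'))ᗮ := by
  refine mem_orthogonal_span_of_forall_inner ?_
  rintro _ ⟨j', rfl⟩
  simp only [inner_add_left, inner_add_right, real_inner_smul_left, real_inner_smul_right,
    huv, real_inner_comm (u _) (v _)]
  rcases eq_or_ne j j' with rfl | hjj'
  · simp only [real_inner_self_eq_norm_sq, hu.1, hv.1]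
    ring
  · simp only [hu.inner_eq_zero hjj', hv.inner_eq_zero hjj']
    ring

variable {K K₁ K₂ : Submodule ℝ E} [K.HasOrthogonalProjection] [K₁.HasOrthogonalProjection]
  [K₂.HasOrthogonalProjection]

theorem reflection_cos_smul_add_sin_smul {u v : E} {α : ℝ}
    (hw : cos α • u + sin α • v ∈ K) (hw' : -sin α • u + cos α • v ∈ Kᗮ) (ψ : ℝ) :
    K.reflection (cos ψ • u + sin ψ • v) = cos (2 * α - ψ) • u + sin (2 * α - ψ) • v := by
  calc K.reflection (cos ψ • u + sin ψ • v)
      = K.reflection (cos (ψ - α) • (cos α • u + sin α • v) +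
          sin (ψ - α) • (-sin α • u + cos α • v)) := by
        rw [cos_smul_add_sin_smul_rotate, add_sub_cancel]
    _ = cos (α - ψ) • (cos α • u + sin α • v) + sin (α - ψ) • (-sin α • u + cos α • v) := by
        rw [map_add, map_smul, map_smul, reflection_mem_subspace_eq_self hw,
          reflection_mem_subspace_orthogonalComplement_eq_neg hw', ← neg_sub α ψ, cos_neg,
          sin_neg, smul_neg, neg_smul, neg_neg]
    _ = cos (2 * α - ψ) • u + sin (2 * α - ψ) • v := by
        rw [cos_smul_add_sin_smul_rotate, show α + (α - ψ) = 2 * α - ψ by ring]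

theorem reflection_reflection_cos_smul_add_sin_smul {u v : E} {α : ℝ}
    (hu : u ∈ K₁) (hv : v ∈ K₁ᗮ) (hw : cos α • u + sin α • v ∈ K₂)
    (hw' : -sin α • u + cos α • v ∈ K₂ᗮ) (φ : ℝ) :
    K₂.reflection (K₁.reflection (cos φ • u + sin φ • v)) =
      cos (2 * α + φ) • u + sin (2 * α + φ) • v := by
  have h₁ := reflection_cos_smul_add_sin_smul (K := K₁) (α := 0) (by simpa using hu)
    (by simpa using hv) φ
  rw [h₁, reflection_cos_smul_add_sin_smul hw hw', mul_zero, zero_sub, sub_neg_eq_add]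

theorem iterate_reflection_comp_reflection_cos_smul_add_sin_smul {u v : E} {α : ℝ}
    (hu : u ∈ K₁) (hv : v ∈ K₁ᗮ) (hw : cos α • u + sin α • v ∈ K₂)
    (hw' : -sin α • u + cos α • v ∈ K₂ᗮ) (φ : ℝ) (m : ℕ) :
    (K₂.reflection ∘ K₁.reflection)^[m] (cos φ • u + sin φ • v) =
      cos (2 * m * α + φ) • u + sin (2 * m * α + φ) • v := by
  induction m with
  | zero => simp
  | succ m ih =>
    rw [Function.iterate_succ_apply', ih, Function.comp_apply,
      reflection_reflection_cos_smul_add_sin_smul hu hv hw hw',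
      show 2 * α + (2 * m * α + φ) = 2 * ((m + 1 : ℕ) : ℝ) * α + φ by push_cast; ring]

theorem iterate_reflection_comp_reflection_of_mem_of_mem_orthogonal {y : E}
    (h₁ : y ∈ K₁) (h₂ : y ∈ K₂ᗮ) (m : ℕ) :
    (K₂.reflection ∘ K₁.reflection)^[m] y = (-1 : ℝ) ^ m • y := by
  induction m with
  | zero => simp
  | succ m ih =>
    rw [Function.iterate_succ_apply', ih, Function.comp_apply, map_smul, map_smul,
      reflection_mem_subspace_eq_self h₁, reflection_mem_subspace_orthogonalComplement_eq_neg h₂,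
      pow_succ, mul_neg_one, neg_smul, smul_neg]

theorem iterate_reflection_comp_reflection_of_mem_orthogonal_sup {y : E}
    (h : y ∈ (K₁ ⊔ K₂)ᗮ) (m : ℕ) : (K₂.reflection ∘ K₁.reflection)^[m] y = y := by
  rw [← inf_orthogonal] at h
  refine Function.iterate_fixed ?_ m
  rw [Function.comp_apply, reflection_mem_subspace_orthogonalComplement_eq_neg h.1, map_neg,
    reflection_mem_subspace_orthogonalComplement_eq_neg h.2, neg_neg]

theorem iterate_reflection_comp_reflection_sum_add_add {κ : Type*} [Fintype κ]
    {u v : κ → E} {α : κ → ℝ} (hu : ∀ j, u j ∈ K₁) (hv : ∀ j, v j ∈ K₁ᗮ)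
    (hw : ∀ j, cos (α j) • u j + sin (α j) • v j ∈ K₂)
    (hw' : ∀ j, -sin (α j) • u j + cos (α j) • v j ∈ K₂ᗮ)
    {y₁ y₂ : E} (hy₁ : y₁ ∈ K₁) (hy₁' : y₁ ∈ K₂ᗮ) (hy₂ : y₂ ∈ (K₁ ⊔ K₂)ᗮ)
    (ρ θ : κ → ℝ) (m : ℕ) :
    (K₂.reflection ∘ K₁.reflection)^[m]
        ((∑ j, ρ j • (cos (θ j) • u j + sin (θ j) • v j)) + y₁ + y₂) =
      (∑ j, ρ j • (cos (2 * m * α j + θ j) • u j + sin (2 * m * α j + θ j) • v j)) +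
        (-1 : ℝ) ^ m • y₁ + y₂ := by
  have hpow : (K₂.reflection ∘ K₁.reflection)^[m] =
      ⇑(((K₁.reflection.trans K₂.reflection).toLinearEquiv : Module.End ℝ E) ^ m) := by
    rw [Module.End.coe_pow]
    rfl
  rw [hpow, map_add, map_add, map_sum, ← hpow,
    iterate_reflection_comp_reflection_of_mem_of_mem_orthogonal hy₁ hy₁',
    iterate_reflection_comp_reflection_of_mem_orthogonal_sup hy₂]
  congr 2
  refine Finset.sum_congr rfl fun j _ => ?_
  rw [hpow, map_smul, ← hpow,
    iterate_reflection_comp_reflection_cos_smul_add_sin_smul (hu j) (hv j) (hw j) (hw' j)]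

end Reflection

/-- Indices are zero-based: `e_j` for `j = 1,…,i` becomes `e ⟨j⟩` for `j : Fin i`, and
`e_{i+k+1−j}` becomes `e ⟨i+k−1−j⟩`. -/
theorem reflection_pair_iterate_formula (n i k : ℕ) (hik : i ≤ k) (hkn : i + k ≤ n)
    (e : OrthonormalBasis (Fin n) ℝ (EuclideanSpace ℝ (Fin n)))
    (α ρ θ : Fin i → ℝ)
    (H₁ H₂ : Submodule ℝ (EuclideanSpace ℝ (Fin n)))
    (hH₁ : H₁ = Submodule.span ℝ (Set.range fun j : Fin k => e ⟨j, by omega⟩))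
    (hH₂ : H₂ = Submodule.span ℝ (Set.range fun j : Fin i =>
      cos (α j) • e ⟨j, by omega⟩ + sin (α j) • e ⟨i + k - 1 - j, by omega⟩))
    (y₁ y₂ x : EuclideanSpace ℝ (Fin n))
    (hy₁ : y₁ ∈ Submodule.span ℝ (Set.range fun j : Fin (k - i) => e ⟨i + j, by omega⟩))
    (hy₂ : y₂ ∈ (H₁ ⊔ H₂)ᗮ)
    (hx : x = (∑ j : Fin i, ρ j •
        (cos (θ j) • e ⟨j, by omega⟩ + sin (θ j) • e ⟨i + k - 1 - j, by omega⟩)) + y₁ + y₂)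
    (m : ℕ) :
    (⇑(Submodule.reflection H₂) ∘ ⇑(Submodule.reflection H₁))^[m] x = (∑ j : Fin i, ρ j •
        (cos (2 * m * α j + θ j) • e ⟨j, by omega⟩ +
          sin (2 * m * α j + θ j) • e ⟨i + k - 1 - j, by omega⟩)) +
      ((-1 : ℝ) ^ m) • y₁ + y₂ := by
  have hne : ∀ a b (ha : a < n) (hb : b < n), a ≠ b → ⟪e ⟨a, ha⟩, e ⟨b, hb⟩⟫ = 0 :=
    fun _ _ _ _ hab => e.orthonormal.inner_eq_zero (Fin.ne_of_val_ne hab)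
  have hu : Orthonormal ℝ fun j : Fin i => e (⟨j, by omega⟩ : Fin n) :=
    e.orthonormal.comp _ fun j j' h => by simp only [Fin.mk.injEq] at h; omega
  have hv : Orthonormal ℝ fun j : Fin i => e (⟨i + k - 1 - j, by omega⟩ : Fin n) :=
    e.orthonormal.comp _ fun j j' h => by simp only [Fin.mk.injEq] at h; omega
  subst hx hH₁ hH₂
  refine iterate_reflection_comp_reflection_sum_add_add ?_ ?_ ?_ ?_ ?_ ?_ hy₂ ρ θ m
  · exact fun j => subset_span ⟨⟨j, by omega⟩, rfl⟩
  · intro j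
    refine mem_orthogonal_span_of_forall_inner ?_
    rintro _ ⟨l, rfl⟩
    exact hne _ _ _ _ (by omega)
  · exact fun j => subset_span ⟨j, rfl⟩
  · exact neg_sin_smul_add_cos_smul_mem_orthogonal_span hu hv
      (fun j j' => hne _ _ _ _ (by omega)) α
  · refine span_mono ?_ hy₁
    rintro _ ⟨l, rfl⟩
    exact ⟨⟨i + l, by omega⟩, rfl⟩
  · refine (isOrtho_span.2 ?_).le hy₁
    rintro _ ⟨l, rfl⟩ _ ⟨j, rfl⟩
    rw [inner_add_right, real_inner_smul_right, real_inner_smul_right, hne _ _ _ _ (by omega),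
      hne _ _ _ _ (by omega), mul_zero, mul_zero, add_zero]
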